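/- (Explicit diagonal solver) Let α ≥ 0. For every F̂ ∈ ℝ^{n×(n−1)} the matrix equation Û(Λ² + (h²α/6)Σ) + Γᵀ Σ⁻¹ Γ Û Σ = h² F̂ has a unique solution Û ∈ ℝ^{n×(n−1)}, given entrywise by Û_{i+1,j} = 6h² σ_i F̂_{i+1,j} / (6 τ_j² σ_i + h² α σ_i σ_j + 6 τ_i² σ_j) for 0 ≤ i ≤ n−1 and 1 ≤ j ≤ n−1 (the denominators are strictly positive). -/
import Mathlib


open Matrix Real

/-- `τ_i = -2 sin(iπ/(2n))`. -/
noncomputable def tau (n i : ℕ) : ℝ := -2 * Real.sin ((i : ℝ) * Real.pi / (2 * n))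

/-- `σ_i = 2(2 + cos(iπ/n))`. -/
noncomputable def sigma (n i : ℕ) : ℝ := 2 * (2 + Real.cos ((i : ℝ) * Real.pi / n))

/-- `Λ = diag(τ_1, …, τ_{n-1})`. -/
noncomputable def Lam (n : ℕ) : Matrix (Fin (n - 1)) (Fin (n - 1)) ℝ :=
  Matrix.diagonal fun j => tau n ((j : ℕ) + 1)

/-- `Σ = diag(σ_1, …, σ_{n-1})`. -/
noncomputable def Sig (n : ℕ) : Matrix (Fin (n - 1)) (Fin (n - 1)) ℝ :=
  Matrix.diagonal fun j => sigma n ((j : ℕ) + 1)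

/-- `Γ = [0, Λ] ∈ ℝ^{(n-1)×n}` (zero first column). -/
noncomputable def Gam (n : ℕ) : Matrix (Fin (n - 1)) (Fin n) ℝ :=
  Matrix.of fun k l => if (l : ℕ) = (k : ℕ) + 1 then tau n ((k : ℕ) + 1) else 0

lemma sigma_pos (n k : ℕ) : 0 < sigma n k := by
  have := Real.neg_one_le_cos ((k:ℝ)*Real.pi/n)
  unfold sigma; nlinarith

lemma tau_zero (n : ℕ) : tau n 0 = 0 := by simp [tau]

lemma tau_sq_pos (n : ℕ) (hn : 2 ≤ n) (k : ℕ) (hk1 : 1 ≤ k) (hk2 : k < n) :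
    0 < (tau n k)^2 := by
  have hnp : (0:ℝ) < n := by positivity
  have hsin : 0 < Real.sin ((k:ℝ)*Real.pi/(2*n)) := by
    apply Real.sin_pos_of_pos_of_lt_pi
    · have : (0:ℝ) < k := by exact_mod_cast hk1
      positivity
    · rw [div_lt_iff₀ (by positivity)]
      have : (k:ℝ) < 2*n := by
        have : (k:ℝ) < n := by exact_mod_cast hk2
        nlinarith
      nlinarith [Real.pi_pos]
  have : tau n k ≠ 0 := by unfold tau; nlinarith
  exact pow_two_pos_of_ne_zero this

lemma Sig_inv (n : ℕ) : (Sig n)⁻¹ = Matrix.diagonal (fun j : Fin (n-1) => (sigma n ((j:ℕ)+1))⁻¹) := by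
  apply Matrix.inv_eq_right_inv
  rw [Sig, Matrix.diagonal_mul_diagonal]
  convert Matrix.diagonal_one with j
  exact mul_inv_cancel₀ (sigma_pos n _).ne'

lemma GamM (n : ℕ) : (Gam n)ᵀ * (Sig n)⁻¹ * Gam n
    = Matrix.diagonal (fun i : Fin n => (tau n (i:ℕ))^2 / sigma n (i:ℕ)) := by
  rw [Sig_inv]
  ext i l
  rw [Matrix.mul_apply]
  simp only [Matrix.mul_diagonal, Matrix.transpose_apply, Gam, Matrix.of_apply,
    Matrix.diagonal_apply]
  by_cases h0 : (i:ℕ) = 0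
  · rw [Finset.sum_eq_zero]
    · rw [h0, tau_zero]
      simp
    · intro x _
      simp [h0]
  · obtain ⟨m, hm⟩ := Nat.exists_eq_succ_of_ne_zero h0
    have hin : (i:ℕ) < n := i.isLt
    have hmn : m < n - 1 := by omega
    rw [Finset.sum_eq_single (⟨m, hmn⟩ : Fin (n-1))]
    · by_cases hil : i = l
      · subst hil
        simp only [hm, Nat.succ_eq_add_one, if_pos rfl, ite_true]
        ring
      · have hl : (l:ℕ) ≠ m+1 := by
          intro hc; exact hil (Fin.ext (by omega))
        simp [hm, hl, hil]
    · intro x _ hx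
      have : (i:ℕ) ≠ ↑x + 1 := by
        intro hc; exact hx (Fin.ext (by simp; omega))
      simp [this]
    · intro hmem; exact absurd (Finset.mem_univ _) hmem


/-- Explicit diagonal solver: for `α ≥ 0` and any `F̂`, the decoupled equation
`Û(Λ² + (h²α/6)Σ) + Γᵀ Σ⁻¹ Γ Û Σ = h² F̂` has a unique solution, given entrywise by
`Û_{i+1,j} = 6h²σ_i F̂_{i+1,j} / (6τ_j²σ_i + h²ασ_iσ_j + 6τ_i²σ_j)`, whose
denominators are strictly positive. -/
theorem stmt13 (n : ℕ) (hn : 2 ≤ n) (h : ℝ) (hh : h = 1 / n) (α : ℝ) (hα : 0 ≤ α)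
    (Fhat : Matrix (Fin n) (Fin (n - 1)) ℝ) :
    (∀ i : Fin n, ∀ j : Fin (n - 1),
      0 < 6 * (tau n ((j : ℕ) + 1)) ^ 2 * sigma n (i : ℕ) +
        h ^ 2 * α * sigma n (i : ℕ) * sigma n ((j : ℕ) + 1) +
        6 * (tau n (i : ℕ)) ^ 2 * sigma n ((j : ℕ) + 1)) ∧
    ∀ Uhat : Matrix (Fin n) (Fin (n - 1)) ℝ,
      (Uhat * (Lam n * Lam n + (h ^ 2 * α / 6) • Sig n) +
          (Gam n)ᵀ * (Sig n)⁻¹ * Gam n * Uhat * Sig n = h ^ 2 • Fhat) ↔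
        Uhat = Matrix.of fun (i : Fin n) (j : Fin (n - 1)) =>
          6 * h ^ 2 * sigma n (i : ℕ) * Fhat i j /
            (6 * (tau n ((j : ℕ) + 1)) ^ 2 * sigma n (i : ℕ) +
              h ^ 2 * α * sigma n (i : ℕ) * sigma n ((j : ℕ) + 1) +
              6 * (tau n (i : ℕ)) ^ 2 * sigma n ((j : ℕ) + 1)) := by
  have hσ : ∀ k : ℕ, 0 < sigma n k := sigma_pos n
  have hD : ∀ i : Fin n, ∀ j : Fin (n - 1),
      0 < 6 * (tau n ((j : ℕ) + 1)) ^ 2 * sigma n (i : ℕ) +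
        h ^ 2 * α * sigma n (i : ℕ) * sigma n ((j : ℕ) + 1) +
        6 * (tau n (i : ℕ)) ^ 2 * sigma n ((j : ℕ) + 1) := by
    intro i j
    have h1 : 0 < (tau n ((j:ℕ)+1))^2 :=
      tau_sq_pos n hn _ (by omega) (by have := j.isLt; omega)
    have h2 : 0 ≤ (tau n (i:ℕ))^2 := sq_nonneg _
    have h3 := hσ (i:ℕ); have h4 := hσ ((j:ℕ)+1)
    have h5 : 0 ≤ h^2*α := by positivity
    nlinarith [mul_pos h1 h3, mul_nonneg (mul_nonneg h5 h3.le) h4.le, mul_nonneg h2 h4.le]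
  refine ⟨hD, fun Uhat => ?_⟩
  have hA : Lam n * Lam n + (h ^ 2 * α / 6) • Sig n
      = Matrix.diagonal (fun j : Fin (n-1) =>
          (tau n ((j:ℕ)+1))^2 + h^2*α/6 * sigma n ((j:ℕ)+1)) := by
    rw [Lam, Sig, Matrix.diagonal_mul_diagonal, ← Matrix.diagonal_smul, ← Matrix.diagonal_add]
    congr 1
    funext j
    simp [pow_two]
  rw [hA, GamM n, Sig, ← Matrix.ext_iff, ← Matrix.ext_iff]
  refine forall_congr' fun i => forall_congr' fun j => ?_
  simp only [Matrix.add_apply, Matrix.mul_diagonal, Matrix.diagonal_mul, Matrix.smul_apply,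
    Matrix.of_apply, smul_eq_mul]
  have hsi := (hσ (i:ℕ)).ne'
  rw [eq_div_iff (hD i j).ne']
  constructor
  · intro he
    field_simp [hsi] at he
    linear_combination he
  · intro he
    field_simp [hsi]
    linear_combination he
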